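/- For density operators ρ and σ on a finite-dimensional Hilbert space, 1 - Tr(√ρ √σ) ≤ (1/2)‖ρ - σ‖₁ ≤ √(1 - (Tr(√ρ √σ))²). -/

import Mathlib

open Matrix MeasureTheory
open scoped Kronecker ComplexOrder

open scoped Classical
noncomputable section

variable {n : Type*} [Fintype n] [DecidableEq n]

/-- positive semidefinite square root (total; junk value `0` off PSD matrices) -/
def msqrt (A : Matrix n n ℂ) : Matrix n n ℂ :=
  if h : A.PosSemidef then
    (h.1.eigenvectorUnitary : Matrix n n ℂ) *
      Matrix.diagonal (fun i => ((Real.sqrt (h.1.eigenvalues i) : ℝ) : ℂ)) *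
      star (h.1.eigenvectorUnitary : Matrix n n ℂ)
  else 0

/-- trace norm -/
def traceNorm (A : Matrix n n ℂ) : ℝ :=
  ((msqrt (Aᴴ * A)).trace).re

/-- Hilbert–Schmidt norm -/
def hsNorm (A : Matrix n n ℂ) : ℝ :=
  Real.sqrt ((Aᴴ * A).trace).re

/-- apply a scalar function via functional calculus (total) -/
def matFun (f : ℝ → ℝ) (A : Matrix n n ℂ) : Matrix n n ℂ :=
  if h : A.IsHermitian then
    (h.eigenvectorUnitary : Matrix n n ℂ) *
      Matrix.diagonal (fun i => (f (h.eigenvalues i) : ℂ)) *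
      (h.eigenvectorUnitary : Matrix n n ℂ)ᴴ
  else 0

def minEig (A : Matrix n n ℂ) : ℝ :=
  if h : A.IsHermitian then ⨅ i, h.eigenvalues i else 0

def minPosEig (A : Matrix n n ℂ) : ℝ :=
  if h : A.IsHermitian then sInf {x : ℝ | x ≠ 0 ∧ ∃ i, h.eigenvalues i = x} else 0

def opNorm {m : Type*} [Fintype m] (A : Matrix m n ℂ) : ℝ :=
  ‖LinearMap.toContinuousLinearMap (Matrix.toEuclideanLin A)‖

variable {a b : Type*} [Fintype a] [DecidableEq a] [Fintype b] [DecidableEq b]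

/-- partial trace over the second tensor factor -/
def ptraceB (M : Matrix (a × b) (a × b) ℂ) : Matrix a a ℂ :=
  Matrix.of fun i j => ∑ k : b, M (i, k) (j, k)

/-- Petz recovery map for `σ` and the partial trace over `B` -/
def petz (σ : Matrix (a × b) (a × b) ℂ) (X : Matrix a a ℂ) : Matrix (a × b) (a × b) ℂ :=
  msqrt σ * (((msqrt (ptraceB σ))⁻¹ * X * (msqrt (ptraceB σ))⁻¹) ⊗ₖ (1 : Matrix b b ℂ)) *
    msqrt σ

/-- isometric extension of the Petz recovery channel -/
def petzV (σ : Matrix (a × b) (a × b) ℂ) : Matrix ((a × b) × (a × b)) (a × a) ℂ :=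
  (msqrt σ ⊗ₖ (1 : Matrix (a × b) (a × b) ℂ)) *
    Matrix.of (fun p q =>
      (msqrt (ptraceB σ))⁻¹ p.1.1 q.1 *
        (if p.2.1 = q.2 ∧ p.1.2 = p.2.2 then 1 else 0))

/-- canonical purification of `σ`, as a vector indexed by `n × n` -/
def purif (σ : Matrix n n ℂ) : n × n → ℂ :=
  fun p => msqrt σ p.1 p.2

/-- Petz quasi-relative entropy `Q_f(ρ‖σ)` -/
def Qf (f : ℝ → ℝ) (ρ σ : Matrix n n ℂ) : ℝ :=
  (dotProduct (star (purif σ)) ((matFun f (σ⁻¹ ⊗ₖ ρᵀ)) *ᵥ purif σ)).re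

/-- operator convexity of `f` on `[0,∞)` (Loewner order stated via `PosSemidef` differences) -/
def OpConvexOn (f : ℝ → ℝ) : Prop :=
  ∀ (k : ℕ) (A B : Matrix (Fin k) (Fin k) ℂ), A.PosSemidef → B.PosSemidef →
    ∀ lam : ℝ, 0 ≤ lam → lam ≤ 1 →
      (((lam : ℂ) • matFun f A + ((1 - lam : ℝ) : ℂ) • matFun f B)
        - matFun f ((lam : ℂ) • A + ((1 - lam : ℝ) : ℂ) • B)).PosSemidef

end

open Classical
variable {n : Type*} [Fintype n] [DecidableEq n]
variable {a b : Type*} [Fintype a] [DecidableEq a] [Fintype b] [DecidableEq b]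

section HolevoAuxSection
open Matrix
open scoped ComplexOrder
set_option linter.unusedSectionVars false

namespace HolevoAux
variable {n : Type*} [Fintype n] [DecidableEq n]
variable {n : Type*} [Fintype n] [DecidableEq n]

noncomputable def fc {C : Matrix n n ℂ} (hC : C.IsHermitian) (g : ℝ → ℝ) : Matrix n n ℂ :=
  (hC.eigenvectorUnitary : Matrix n n ℂ) *
    Matrix.diagonal (fun i => (g (hC.eigenvalues i) : ℂ)) *
    (star (hC.eigenvectorUnitary : Matrix n n ℂ))

variable {C : Matrix n n ℂ} (hC : C.IsHermitian)

lemma hVsV : (star (hC.eigenvectorUnitary : Matrix n n ℂ)) * (hC.eigenvectorUnitary : Matrix n n ℂ) = 1 := by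
  exact_mod_cast Unitary.coe_star_mul_self hC.eigenvectorUnitary

lemma hVVs : (hC.eigenvectorUnitary : Matrix n n ℂ) * (star (hC.eigenvectorUnitary : Matrix n n ℂ)) = 1 := by
  exact_mod_cast Unitary.coe_mul_star_self hC.eigenvectorUnitary

lemma fc_id : fc hC (fun x => x) = C := hC.spectral_theorem.symm

lemma fc_one : fc hC (fun _ => (1:ℝ)) = 1 := by
  simp only [fc, Complex.ofReal_one, Matrix.diagonal_one, Matrix.mul_one]
  exact hVVs hC

lemma fc_mul (g h : ℝ → ℝ) : fc hC g * fc hC h = fc hC (fun x => g x * h x) := by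
  have key : ∀ X : Matrix n n ℂ, (star (hC.eigenvectorUnitary : Matrix n n ℂ)) *
      ((hC.eigenvectorUnitary : Matrix n n ℂ) * X) = X := fun X => by
    rw [← Matrix.mul_assoc, hVsV hC, Matrix.one_mul]
  simp only [fc, Matrix.mul_assoc, key]
  simp only [← Matrix.mul_assoc, Matrix.diagonal_mul_diagonal]
  push_cast
  rfl

lemma fc_add (g h : ℝ → ℝ) : fc hC (fun x => g x + h x) = fc hC g + fc hC h := by
  simp only [fc]
  rw [show (Matrix.diagonal fun i => ((g (hC.eigenvalues i) + h (hC.eigenvalues i) : ℝ) : ℂ)) =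
      Matrix.diagonal (fun i => ((g (hC.eigenvalues i) : ℝ) : ℂ)) +
      Matrix.diagonal (fun i => ((h (hC.eigenvalues i) : ℝ) : ℂ)) by
    rw [Matrix.diagonal_add]; push_cast; rfl]
  rw [Matrix.mul_add, Matrix.add_mul]

lemma fc_sub (g h : ℝ → ℝ) : fc hC (fun x => g x - h x) = fc hC g - fc hC h := by
  have := fc_add hC (fun x => g x - h x) h
  simp only [sub_add_cancel] at this
  rw [this]; abel

lemma fc_psd {g : ℝ → ℝ} (hg : ∀ x, 0 ≤ g x) : (fc hC g).PosSemidef := by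
  have hd : (Matrix.diagonal fun i => ((g (hC.eigenvalues i) : ℝ) : ℂ)).PosSemidef :=
    Matrix.posSemidef_diagonal_iff.mpr fun i => by exact_mod_cast hg _
  simpa [fc, Matrix.star_eq_conjTranspose] using
    hd.mul_mul_conjTranspose_same (hC.eigenvectorUnitary : Matrix n n ℂ)

lemma fc_herm (g : ℝ → ℝ) : (fc hC g).IsHermitian := by
  have hd : (Matrix.diagonal fun i => ((g (hC.eigenvalues i) : ℝ) : ℂ)).IsHermitian := by
    rw [Matrix.IsHermitian]
    ext i j
    by_cases hij : i = j
    · subst hij; simp [Matrix.conjTranspose_apply, Matrix.diagonal_apply, Complex.conj_ofReal]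
    · simp [Matrix.conjTranspose_apply, Matrix.diagonal_apply, hij, Ne.symm hij]
  simpa [fc, Matrix.star_eq_conjTranspose] using
    Matrix.isHermitian_mul_mul_conjTranspose (hC.eigenvectorUnitary : Matrix n n ℂ) hd

lemma trace_mul_diagonal' (M : Matrix n n ℂ) (d : n → ℂ) :
    (M * Matrix.diagonal d).trace = ∑ i, M i i * d i := by
  simp [Matrix.trace, Matrix.diag, Matrix.mul_apply, Matrix.diagonal]

lemma fc_trace (g : ℝ → ℝ) : (fc hC g).trace = ∑ i, ((g (hC.eigenvalues i) : ℝ) : ℂ) := by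
  simp only [fc]
  rw [Matrix.trace_mul_cycle, hVsV hC, Matrix.one_mul, Matrix.trace_diagonal]

lemma fc_trace_re (g : ℝ → ℝ) : ((fc hC g).trace).re = ∑ i, g (hC.eigenvalues i) := by
  rw [fc_trace, Complex.re_sum]
  simp

lemma fc_congr {g g' : ℝ → ℝ} (h : ∀ i, g (hC.eigenvalues i) = g' (hC.eigenvalues i)) :
    fc hC g = fc hC g' := by
  simp only [fc, h]

lemma msqrt_eq_fc {X : Matrix n n ℂ} (hX : X.PosSemidef) : msqrt X = fc hX.1 Real.sqrt := by
  rw [msqrt, dif_pos hX]; rfl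

lemma msqrt_psd {X : Matrix n n ℂ} (hX : X.PosSemidef) : (msqrt X).PosSemidef := by
  rw [msqrt_eq_fc hX]; exact fc_psd hX.1 (fun x => Real.sqrt_nonneg x)

lemma msqrt_mul_self {X : Matrix n n ℂ} (hX : X.PosSemidef) : msqrt X * msqrt X = X := by
  rw [msqrt_eq_fc hX, fc_mul]
  conv_rhs => rw [← fc_id hX.1]
  exact fc_congr hX.1 fun i => Real.mul_self_sqrt (hX.eigenvalues_nonneg i)

section MO
open scoped MatrixOrder

lemma psd_sq_unique {X Y : Matrix n n ℂ} (hX : X.PosSemidef) (hY : Y.PosSemidef)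
    (h : X * X = Y * Y) : X = Y :=
  (CFC.mul_self_eq_mul_self_iff X Y hX.nonneg hY.nonneg).mp h

end MO

variable {n : Type*} [Fintype n] [DecidableEq n]

lemma psd_diag_re_nonneg {M : Matrix n n ℂ} (hM : M.PosSemidef) (i : n) : 0 ≤ (M i i).re := by
  exact (Complex.le_def.mp (hM.diag_nonneg (i := i))).1

lemma psd_trace_re_nonneg {M : Matrix n n ℂ} (hM : M.PosSemidef) : 0 ≤ M.trace.re := by
  rw [Matrix.trace, Complex.re_sum]
  exact Finset.sum_nonneg fun i _ => psd_diag_re_nonneg hM i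

lemma psd_mul_trace_re_nonneg {X Y : Matrix n n ℂ} (hX : X.PosSemidef) (hY : Y.PosSemidef) :
    0 ≤ ((X * Y).trace).re := by
  have h1 : msqrt X * msqrt X = X := msqrt_mul_self hX
  have e : (X * Y).trace = (msqrt X * Y * msqrt X).trace := by
    rw [Matrix.trace_mul_cycle, h1]
  rw [e]
  have hpsd : (msqrt X * Y * msqrt X).PosSemidef := by
    have := hY.conjTranspose_mul_mul_same (msqrt X)
    rwa [(msqrt_psd hX).1.eq] at this
  exact psd_trace_re_nonneg hpsd

lemma trace_CS (X Y : Matrix n n ℂ) :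
    ((Xᴴ * Y).trace).re ≤ Real.sqrt (((Xᴴ * X).trace).re) * Real.sqrt (((Yᴴ * Y).trace).re) := by
  classical
  set u : EuclideanSpace ℂ (n × n) := WithLp.toLp 2 (fun p : n × n => X p.1 p.2) with hu
  set v : EuclideanSpace ℂ (n × n) := WithLp.toLp 2 (fun p : n × n => Y p.1 p.2) with hv
  have key : ∀ (P Q : Matrix n n ℂ), (Pᴴ * Q).trace =
      ∑ p : n × n, (starRingEnd ℂ) (P p.1 p.2) * Q p.1 p.2 := by
    intro P Q
    rw [Fintype.sum_prod_type]
    rw [show (Pᴴ * Q).trace = ∑ j, ∑ i, (starRingEnd ℂ) (P i j) * Q i j by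
      simp [Matrix.trace, Matrix.diag, Matrix.mul_apply, Matrix.conjTranspose_apply]]
    exact Finset.sum_comm
  have hinner : (Xᴴ * Y).trace = inner ℂ u v := by
    rw [key, PiLp.inner_apply]
    refine Finset.sum_congr rfl fun p _ => ?_
    simp [hu, hv, mul_comm]
  have hnormu : Real.sqrt (((Xᴴ * X).trace).re) = ‖u‖ := by
    rw [EuclideanSpace.norm_eq]
    congr 1
    rw [key, Complex.re_sum]
    refine Finset.sum_congr rfl fun p _ => ?_
    rw [Complex.conj_mul']
    simp [hu, ← Complex.ofReal_pow]
  have hnormv : Real.sqrt (((Yᴴ * Y).trace).re) = ‖v‖ := by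
    rw [EuclideanSpace.norm_eq]
    congr 1
    rw [key, Complex.re_sum]
    refine Finset.sum_congr rfl fun p _ => ?_
    rw [Complex.conj_mul']
    simp [hv, ← Complex.ofReal_pow]
  rw [hinner, hnormu, hnormv]
  calc (inner ℂ u v : ℂ).re ≤ ‖(inner ℂ u v : ℂ)‖ := Complex.re_le_norm _
    _ ≤ ‖u‖ * ‖v‖ := norm_inner_le_norm u v

variable {n : Type*} [Fintype n] [DecidableEq n]


lemma trace_contraction {X U : Matrix n n ℂ} (hX : X.IsHermitian)
    (h1 : (1 - U).PosSemidef) (h2 : (1 + U).PosSemidef) :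
    ((U * X).trace).re ≤ ∑ i, |hX.eigenvalues i| := by
  set V := (hX.eigenvectorUnitary : Matrix n n ℂ) with hV
  have hsV : star V * V = 1 := by exact_mod_cast Unitary.coe_star_mul_self hX.eigenvectorUnitary
  set M := star V * U * V with hM
  have htr : (U * X).trace = ∑ i, M i i * (hX.eigenvalues i : ℂ) := by
    conv_lhs => rw [← fc_id hX, fc]
    rw [← hV]
    simp only [← Matrix.mul_assoc]
    rw [Matrix.trace_mul_cycle, ← Matrix.mul_assoc, ← hM, trace_mul_diagonal']
  have hub : ∀ i, (M i i).re ≤ 1 := by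
    intro i
    have hpsd : (1 - M).PosSemidef := by
      have h := h1.conjTranspose_mul_mul_same V
      have e : Vᴴ * (1 - U) * V = 1 - M := by
        rw [Matrix.mul_sub, Matrix.mul_one, Matrix.sub_mul, ← Matrix.star_eq_conjTranspose, hsV, hM]
      rwa [e] at h
    have := psd_diag_re_nonneg hpsd i
    rw [Matrix.sub_apply, Matrix.one_apply_eq, Complex.sub_re, Complex.one_re] at this
    linarith
  have hlb : ∀ i, -1 ≤ (M i i).re := by
    intro i
    have hpsd : (1 + M).PosSemidef := by
      have h := h2.conjTranspose_mul_mul_same V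
      have e : Vᴴ * (1 + U) * V = 1 + M := by
        rw [Matrix.mul_add, Matrix.mul_one, Matrix.add_mul, ← Matrix.star_eq_conjTranspose, hsV, hM]
      rwa [e] at h
    have := psd_diag_re_nonneg hpsd i
    rw [Matrix.add_apply, Matrix.one_apply_eq, Complex.add_re, Complex.one_re] at this
    linarith
  rw [htr, Complex.re_sum]
  refine Finset.sum_le_sum fun i _ => ?_
  have hre : (M i i * (hX.eigenvalues i : ℂ)).re = (M i i).re * hX.eigenvalues i := by
    simp [Complex.mul_re]
  rw [hre]
  rcases le_or_gt 0 (hX.eigenvalues i) with h | h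
  · calc (M i i).re * hX.eigenvalues i ≤ 1 * hX.eigenvalues i :=
        mul_le_mul_of_nonneg_right (hub i) h
      _ = |hX.eigenvalues i| := by rw [one_mul, abs_of_nonneg h]
  · calc (M i i).re * hX.eigenvalues i ≤ (-1) * hX.eigenvalues i :=
        mul_le_mul_of_nonpos_right (hlb i) h.le
      _ = |hX.eigenvalues i| := by rw [neg_one_mul, abs_of_neg h]

end HolevoAux
end HolevoAuxSection

/-- Holevo's inequalities (eq. 1):
`1 - Tr(√ρ√σ) ≤ (1/2)‖ρ-σ‖₁ ≤ √(1 - (Tr(√ρ√σ))²)` for density operators. -/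
theorem holevo_inequalities (ρ σ : Matrix n n ℂ)
    (hρ : ρ.PosSemidef) (hρ1 : ρ.trace = 1)
    (hσ : σ.PosSemidef) (hσ1 : σ.trace = 1) :
    1 - ((msqrt ρ * msqrt σ).trace).re ≤ (1 / 2) * traceNorm (ρ - σ) ∧
      (1 / 2) * traceNorm (ρ - σ) ≤
        Real.sqrt (1 - (((msqrt ρ * msqrt σ).trace).re) ^ 2) := by
  classical
  have hA0 : msqrt ρ = HolevoAux.fc hρ.1 Real.sqrt := HolevoAux.msqrt_eq_fc hρ
  have hB0 : msqrt σ = HolevoAux.fc hσ.1 Real.sqrt := HolevoAux.msqrt_eq_fc hσ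
  set A := msqrt ρ with hAdef
  set B := msqrt σ with hBdef
  have hApsd : A.PosSemidef := HolevoAux.msqrt_psd hρ
  have hBpsd : B.PosSemidef := HolevoAux.msqrt_psd hσ
  have hAA : A * A = ρ := HolevoAux.msqrt_mul_self hρ
  have hBB : B * B = σ := HolevoAux.msqrt_mul_self hσ
  set F : ℝ := ((A * B).trace).re with hFdef
  have hD : (ρ - σ).IsHermitian := hρ.1.sub hσ.1
  have hC : (A - B).IsHermitian := hApsd.1.sub hBpsd.1
  have hS : (A + B).IsHermitian := hApsd.1.add hBpsd.1
  have hiden : (A - B) * (A + B) + (A + B) * (A - B) = (ρ - σ) + (ρ - σ) := by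
    have e : (A - B) * (A + B) + (A + B) * (A - B)
        = (A * A - B * B) + (A * A - B * B) := by noncomm_ring
    rw [e, hAA, hBB]
  have hDDpsd : ((ρ - σ)ᴴ * (ρ - σ)).PosSemidef := Matrix.posSemidef_conjTranspose_mul_self _
  have habs : msqrt ((ρ - σ)ᴴ * (ρ - σ)) = HolevoAux.fc hD (fun x => |x|) := by
    refine HolevoAux.psd_sq_unique (HolevoAux.msqrt_psd hDDpsd)
      (HolevoAux.fc_psd hD (fun x => abs_nonneg x)) ?_
    rw [HolevoAux.msqrt_mul_self hDDpsd, HolevoAux.fc_mul]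
    rw [show (fun x : ℝ => |x| * |x|) = fun x : ℝ => x * x from
      funext fun x => abs_mul_abs_self x]
    rw [← HolevoAux.fc_mul, HolevoAux.fc_id, hD.eq]
  have htn : traceNorm (ρ - σ) = ((HolevoAux.fc hD (fun x => |x|)).trace).re := by
    rw [traceNorm, habs]
  set s : ℝ → ℝ := fun x => if 0 ≤ x then 1 else -1 with hsdef
  have hsabs : ∀ x : ℝ, s x * x = |x| := by
    intro x
    rcases le_or_gt 0 x with h | h
    · simp [hsdef, h, abs_of_nonneg h]
    · simp [hsdef, not_le.mpr h, abs_of_neg h]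
  have hssq : (fun x : ℝ => s x * s x) = fun _ : ℝ => (1:ℝ) := by
    funext x
    rcases le_or_gt 0 x with h | h
    · simp [hsdef, h]
    · simp [hsdef, not_le.mpr h]
  have hs1 : ∀ x : ℝ, 0 ≤ 1 - s x := by
    intro x
    by_cases h : 0 ≤ x <;> simp [hsdef, h] <;> norm_num
  have hs2 : ∀ x : ℝ, 0 ≤ 1 + s x := by
    intro x
    by_cases h : 0 ≤ x <;> simp [hsdef, h] <;> norm_num
  have sgn_psd : ∀ (X : Matrix n n ℂ) (hX : X.IsHermitian),
      (1 - HolevoAux.fc hX s).PosSemidef ∧ (1 + HolevoAux.fc hX s).PosSemidef := by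
    intro X hX
    constructor
    · rw [show (1 : Matrix n n ℂ) - HolevoAux.fc hX s = HolevoAux.fc hX (fun x => 1 - s x) by
        rw [HolevoAux.fc_sub, HolevoAux.fc_one]]
      exact HolevoAux.fc_psd hX hs1
    · rw [show (1 : Matrix n n ℂ) + HolevoAux.fc hX s = HolevoAux.fc hX (fun x => 1 + s x) by
        rw [HolevoAux.fc_add, HolevoAux.fc_one]]
      exact HolevoAux.fc_psd hX hs2
  have contract : ∀ (U : Matrix n n ℂ), (1 - U).PosSemidef → (1 + U).PosSemidef →
      ((U * (ρ - σ)).trace).re ≤ traceNorm (ρ - σ) := by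
    intro U hU1 hU2
    rw [htn, HolevoAux.fc_trace_re]
    exact HolevoAux.trace_contraction hD hU1 hU2
  -- ===== lower bound =====
  set W := HolevoAux.fc hC s with hWdef
  have hWC : W * (A - B) = HolevoAux.fc hC (fun x => |x|) := by
    conv_lhs => rw [show A - B = HolevoAux.fc hC (fun x => x) from (HolevoAux.fc_id hC).symm]
    rw [hWdef, HolevoAux.fc_mul]
    exact congrArg _ (funext hsabs)
  have hCW : (A - B) * W = HolevoAux.fc hC (fun x => |x|) := by
    conv_lhs => rw [show A - B = HolevoAux.fc hC (fun x => x) from (HolevoAux.fc_id hC).symm]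
    rw [hWdef, HolevoAux.fc_mul]
    refine congrArg _ (funext fun x => ?_)
    rw [mul_comm]
    exact hsabs x
  have key1 : (W * (ρ - σ)).trace = (HolevoAux.fc hC (fun x => |x|) * (A + B)).trace := by
    have h2 : (W * ((A - B) * (A + B))).trace + (W * ((A + B) * (A - B))).trace
        = (W * (ρ - σ)).trace + (W * (ρ - σ)).trace := by
      rw [← Matrix.trace_add, ← Matrix.mul_add, hiden, Matrix.mul_add, Matrix.trace_add]
    have t1 : (W * ((A - B) * (A + B))).trace =
        (HolevoAux.fc hC (fun x => |x|) * (A + B)).trace := by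
      rw [← Matrix.mul_assoc, hWC]
    have t2 : (W * ((A + B) * (A - B))).trace =
        (HolevoAux.fc hC (fun x => |x|) * (A + B)).trace := by
      rw [← Matrix.mul_assoc, Matrix.trace_mul_cycle, hCW]
    rw [t1, t2] at h2
    refine mul_left_cancel₀ (two_ne_zero' ℂ) ?_
    rw [two_mul, two_mul]
    exact h2.symm
  set P := HolevoAux.fc hC (fun x => max x 0) with hPdef
  set N := HolevoAux.fc hC (fun x => max (-x) 0) with hNdef
  have hPpsd : P.PosSemidef := HolevoAux.fc_psd hC fun x => le_max_right _ _
  have hNpsd : N.PosSemidef := HolevoAux.fc_psd hC fun x => le_max_right _ _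
  have habsPN : HolevoAux.fc hC (fun x => |x|) = P + N := by
    rw [hPdef, hNdef, ← HolevoAux.fc_add]
    exact congrArg _ (funext fun x => (max_zero_add_max_neg_zero_eq_abs_self x).symm)
  have h2B : ((A + B) - (A - B)).PosSemidef := by
    have e : (A + B) - (A - B) = B + B := by abel
    rw [e]; exact hBpsd.add hBpsd
  have h2A : ((A + B) + (A - B)).PosSemidef := by
    have e : (A + B) + (A - B) = A + A := by abel
    rw [e]; exact hApsd.add hApsd
  have hP0 : 0 ≤ ((P * ((A + B) - (A - B))).trace).re :=
    HolevoAux.psd_mul_trace_re_nonneg hPpsd h2B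
  have hN0 : 0 ≤ ((N * ((A + B) + (A - B))).trace).re :=
    HolevoAux.psd_mul_trace_re_nonneg hNpsd h2A
  have hPexp : ((P * ((A + B) - (A - B))).trace).re
      = ((P * (A + B)).trace).re - ((P * (A - B)).trace).re := by
    rw [Matrix.mul_sub, Matrix.trace_sub, Complex.sub_re]
  have hNexp : ((N * ((A + B) + (A - B))).trace).re
      = ((N * (A + B)).trace).re + ((N * (A - B)).trace).re := by
    rw [Matrix.mul_add, Matrix.trace_add, Complex.add_re]
  have hPNC : P * (A - B) - N * (A - B) = (A - B) * (A - B) := by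
    have e1 : P * (A - B) = HolevoAux.fc hC (fun x => max x 0 * x) := by
      conv_lhs => rw [show A - B = HolevoAux.fc hC (fun x => x) from (HolevoAux.fc_id hC).symm]
      rw [hPdef, HolevoAux.fc_mul]
    have e2 : N * (A - B) = HolevoAux.fc hC (fun x => max (-x) 0 * x) := by
      conv_lhs => rw [show A - B = HolevoAux.fc hC (fun x => x) from (HolevoAux.fc_id hC).symm]
      rw [hNdef, HolevoAux.fc_mul]
    have e3 : (A - B) * (A - B) = HolevoAux.fc hC (fun x => x * x) := by
      conv_lhs => rw [show A - B = HolevoAux.fc hC (fun x => x) from (HolevoAux.fc_id hC).symm]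
      rw [HolevoAux.fc_mul]
    rw [e1, e2, e3, ← HolevoAux.fc_sub]
    refine congrArg _ (funext fun x => ?_)
    show max x 0 * x - max (-x) 0 * x = x * x
    rcases le_or_gt 0 x with h | h
    · rw [max_eq_left h, max_eq_right (neg_nonpos.mpr h)]; ring
    · rw [max_eq_right h.le, max_eq_left (neg_nonneg.mpr h.le)]; ring
  have hCCtr : (((A - B) * (A - B)).trace).re = 2 - 2 * F := by
    have e : (A - B) * (A - B) = (A * A + B * B) - (A * B + B * A) := by noncomm_ring
    rw [e, hAA, hBB, Matrix.trace_sub, Matrix.trace_add, Matrix.trace_add, hρ1, hσ1,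
      Matrix.trace_mul_comm B A]
    rw [Complex.sub_re, Complex.add_re, Complex.add_re, Complex.one_re, ← hFdef]
    ring
  have hSStr : (((A + B) * (A + B)).trace).re = 2 + 2 * F := by
    have e : (A + B) * (A + B) = (A * A + B * B) + (A * B + B * A) := by noncomm_ring
    rw [e, hAA, hBB, Matrix.trace_add, Matrix.trace_add, Matrix.trace_add, hρ1, hσ1,
      Matrix.trace_mul_comm B A]
    rw [Complex.add_re, Complex.add_re, Complex.add_re, Complex.one_re, ← hFdef]
    ring
  have hWpsd := sgn_psd (A - B) hC
  have hlow : 2 - 2 * F ≤ traceNorm (ρ - σ) := by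
    have c1 : ((W * (ρ - σ)).trace).re ≤ traceNorm (ρ - σ) :=
      contract W hWpsd.1 hWpsd.2
    have c3 : (((A - B) * (A - B)).trace).re
        ≤ ((HolevoAux.fc hC (fun x => |x|) * (A + B)).trace).re := by
      have expand : HolevoAux.fc hC (fun x => |x|) * (A + B) = P * (A + B) + N * (A + B) := by
        rw [habsPN, Matrix.add_mul]
      have etr : (((A - B) * (A - B)).trace).re =
          ((P * (A - B)).trace).re - ((N * (A - B)).trace).re := by
        rw [← hPNC, Matrix.trace_sub, Complex.sub_re]
      rw [expand, Matrix.trace_add, Complex.add_re, etr]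
      have hp := hP0; rw [hPexp] at hp
      have hn := hN0; rw [hNexp] at hn
      linarith
    calc 2 - 2 * F = (((A - B) * (A - B)).trace).re := hCCtr.symm
      _ ≤ ((HolevoAux.fc hC (fun x => |x|) * (A + B)).trace).re := c3
      _ = ((W * (ρ - σ)).trace).re := by rw [key1]
      _ ≤ traceNorm (ρ - σ) := c1
  -- ===== upper bound =====
  set U := HolevoAux.fc hD s with hUdef
  have hUherm : U.IsHermitian := HolevoAux.fc_herm hD s
  have hUabs : U * (ρ - σ) = HolevoAux.fc hD (fun x => |x|) := by
    conv_lhs => rw [show ρ - σ = HolevoAux.fc hD (fun x => x) from (HolevoAux.fc_id hD).symm]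
    rw [hUdef, HolevoAux.fc_mul]
    exact congrArg _ (funext hsabs)
  have hUU : U * U = 1 := by
    rw [hUdef, HolevoAux.fc_mul, hssq]
    exact HolevoAux.fc_one hD
  have htneq : traceNorm (ρ - σ) = ((U * (ρ - σ)).trace).re := by
    rw [hUabs]; exact htn
  have hcs1 : ((U * ((A - B) * (A + B))).trace).re
      ≤ Real.sqrt (2 - 2 * F) * Real.sqrt (2 + 2 * F) := by
    have ecyc : (U * ((A - B) * (A + B))).trace = ((A - B)ᴴ * ((A + B) * U)).trace := by
      rw [hC.eq, ← Matrix.mul_assoc, Matrix.trace_mul_cycle, Matrix.trace_mul_comm]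
    have hcs := HolevoAux.trace_CS (A - B) ((A + B) * U)
    have f1 : (((A - B)ᴴ * (A - B)).trace).re = 2 - 2 * F := by rw [hC.eq]; exact hCCtr
    have f2 : ((((A + B) * U)ᴴ * ((A + B) * U)).trace).re = 2 + 2 * F := by
      have hct : ((A + B) * U)ᴴ = U * (A + B) := by
        rw [Matrix.conjTranspose_mul, hS.eq, hUherm.eq]
      rw [hct]
      have e2 : U * (A + B) * ((A + B) * U) = U * ((A + B) * (A + B)) * U := by
        simp [Matrix.mul_assoc]
      rw [e2, Matrix.trace_mul_cycle, ← Matrix.mul_assoc, hUU, Matrix.one_mul]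
      exact hSStr
    rw [ecyc]
    calc (((A - B)ᴴ * ((A + B) * U)).trace).re
        ≤ Real.sqrt ((((A - B)ᴴ * (A - B)).trace).re) *
          Real.sqrt (((((A + B) * U)ᴴ * ((A + B) * U)).trace).re) := hcs
      _ = Real.sqrt (2 - 2 * F) * Real.sqrt (2 + 2 * F) := by rw [f1, f2]
  have hcs2 : ((U * ((A + B) * (A - B))).trace).re
      ≤ Real.sqrt (2 - 2 * F) * Real.sqrt (2 + 2 * F) := by
    have ecyc : (U * ((A + B) * (A - B))).trace = ((A - B)ᴴ * (U * (A + B))).trace := by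
      rw [hC.eq, ← Matrix.mul_assoc, Matrix.trace_mul_cycle, Matrix.mul_assoc]
    have hcs := HolevoAux.trace_CS (A - B) (U * (A + B))
    have f1 : (((A - B)ᴴ * (A - B)).trace).re = 2 - 2 * F := by rw [hC.eq]; exact hCCtr
    have f2 : (((U * (A + B))ᴴ * (U * (A + B))).trace).re = 2 + 2 * F := by
      have hct : (U * (A + B))ᴴ = (A + B) * U := by
        rw [Matrix.conjTranspose_mul, hS.eq, hUherm.eq]
      rw [hct]
      have e2 : (A + B) * U * (U * (A + B)) = (A + B) * (A + B) := by
        rw [Matrix.mul_assoc, ← Matrix.mul_assoc U U, hUU, Matrix.one_mul]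
      rw [e2]
      exact hSStr
    rw [ecyc]
    calc (((A - B)ᴴ * (U * (A + B))).trace).re
        ≤ Real.sqrt ((((A - B)ᴴ * (A - B)).trace).re) *
          Real.sqrt ((((U * (A + B))ᴴ * (U * (A + B))).trace).re) := hcs
      _ = Real.sqrt (2 - 2 * F) * Real.sqrt (2 + 2 * F) := by rw [f1, f2]
  have hsplit : ((U * (ρ - σ)).trace).re + ((U * (ρ - σ)).trace).re =
      ((U * ((A - B) * (A + B))).trace).re + ((U * ((A + B) * (A - B))).trace).re := by
    have h2 : (U * ((A - B) * (A + B))).trace + (U * ((A + B) * (A - B))).trace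
        = (U * (ρ - σ)).trace + (U * (ρ - σ)).trace := by
      rw [← Matrix.trace_add, ← Matrix.mul_add, hiden, Matrix.mul_add, Matrix.trace_add]
    have h3 := congrArg Complex.re h2
    rw [Complex.add_re, Complex.add_re] at h3
    exact h3.symm
  have h2F : 0 ≤ 2 - 2 * F := by
    rw [← hCCtr]
    have hpsd : ((A - B)ᴴ * (A - B)).PosSemidef := Matrix.posSemidef_conjTranspose_mul_self _
    have htr := HolevoAux.psd_trace_re_nonneg hpsd
    rwa [hC.eq] at htr
  have hsqrt : Real.sqrt (2 - 2 * F) * Real.sqrt (2 + 2 * F) = 2 * Real.sqrt (1 - F ^ 2) := by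
    rw [← Real.sqrt_mul h2F, show (2 - 2 * F) * (2 + 2 * F) = 4 * (1 - F ^ 2) by ring,
      Real.sqrt_mul (by norm_num : (0:ℝ) ≤ 4), show Real.sqrt 4 = 2 by
        rw [show (4:ℝ) = 2 ^ 2 by norm_num, Real.sqrt_sq (by norm_num : (0:ℝ) ≤ 2)]]
  have hub : traceNorm (ρ - σ) + traceNorm (ρ - σ) ≤ 2 * (2 * Real.sqrt (1 - F ^ 2)) := by
    rw [htneq, hsplit]
    calc ((U * ((A - B) * (A + B))).trace).re + ((U * ((A + B) * (A - B))).trace).re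
        ≤ Real.sqrt (2 - 2 * F) * Real.sqrt (2 + 2 * F)
          + Real.sqrt (2 - 2 * F) * Real.sqrt (2 + 2 * F) := add_le_add hcs1 hcs2
      _ = 2 * (2 * Real.sqrt (1 - F ^ 2)) := by rw [hsqrt]; ring
  exact ⟨by linarith, by linarith⟩
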